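/- Let $\mathcal{N}$ be a finite set, and let $\mathcal{W}_p, \mathcal{W}_e, \mathcal{V}_p, \mathcal{V}_e \subseteq \mathcal{N}$ be pairwise relevant sets with $\mathcal{W}_p \cap \mathcal{W}_e = \emptyset$, $\mathcal{V}_p \cap \mathcal{V}_e = \emptyset$, $\mathcal{W}_p \cup \mathcal{W}_e \subseteq \mathcal{V}_p \cup \mathcal{V}_e$, and additionally $\mathcal{W}_p \setminus \mathcal{V}_p = \mathcal{V}_e \cap \mathcal{W}_p$ and $\mathcal{V}_p \setminus \mathcal{W}_p \supseteq \mathcal{V}_p \cap \mathcal{W}_e$. Suppose for each $i$: $\underline{p}_i(t) \le \overline{p}_i(t)$, $\underline{e}_i(t) \le \overline{e}_i(t)$ (Hypo 1), $\underline{e}_i(t-1) \le e_i(t-1) \le \overline{e}_i(t-1)$, and $\underline{p}_i(t) \le \overline{e}_i(t) - \overline{e}_i(t-1)$, $\underline{e}_i(t) - \underline{e}_i(t-1) \le \overline{p}_i(t)$ (Hypo 2). Then $\sum_{i \in \mathcal{V}_p \cap \mathcal{W}_e} e_i(t-1) + \sum_{i \in \mathcal{V}_p \cap \mathcal{W}_e}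 \underline{p}_i(t) + \sum_{i \in \mathcal{V}_e \cap \mathcal{W}_p} \underline{e}_i(t) \le \sum_{i \in \mathcal{W}_p \setminus \mathcal{V}_p} e_i(t-1) + \sum_{i \in \mathcal{V}_e \cap \mathcal{W}_p} \overline{p}_i(t) + \sum_{i \in \mathcal{V}_p \cap \mathcal{W}_e} \overline{e}_i(t)$. -/
import Mathlib

open Finset

/-- Key inequality (A.7) in the proof of Theorem 1 (redundancy of SP–RA). -/
theorem stmt_7 {ι : Type} [DecidableEq ι] (N Wp We Vp Ve : Finset ι)
    (hWpN : Wp ⊆ N) (hWeN : We ⊆ N) (hVpN : Vp ⊆ N) (hVeN : Ve ⊆ N)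
    (hW : Disjoint Wp We) (hV : Disjoint Vp Ve)
    (hWV : Wp ∪ We ⊆ Vp ∪ Ve)
    (pl pu el eu el' eu' e' : ι → ℝ)
    (hyp1p : ∀ i ∈ N, pl i ≤ pu i) (hyp1e : ∀ i ∈ N, el i ≤ eu i)
    (heb : ∀ i ∈ N, el' i ≤ e' i ∧ e' i ≤ eu' i)
    (hyp2 : ∀ i ∈ N, pl i ≤ eu i - eu' i ∧ el i - el' i ≤ pu i)
    (hset1 : Wp \ Vp = Ve ∩ Wp) (hset2 : Vp ∩ We ⊆ Vp \ Wp) :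
    (∑ i ∈ Vp ∩ We, e' i) + (∑ i ∈ Vp ∩ We, pl i) + (∑ i ∈ Ve ∩ Wp, el i) ≤
      (∑ i ∈ Wp \ Vp, e' i) + (∑ i ∈ Ve ∩ Wp, pu i) + (∑ i ∈ Vp ∩ We, eu i) := by
  have h1 : ∑ i ∈ Vp ∩ We, (e' i + pl i) ≤ ∑ i ∈ Vp ∩ We, eu i := by
    apply sum_le_sum
    intro i hi
    have hiN : i ∈ N := hVpN (mem_of_mem_inter_left hi)
    have := (heb i hiN).2
    have := (hyp2 i hiN).1
    linarith
  have h2 : ∑ i ∈ Ve ∩ Wp, el i ≤ ∑ i ∈ Ve ∩ Wp, (e' i + pu i) := by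
    apply sum_le_sum
    intro i hi
    have hiN : i ∈ N := hVeN (mem_of_mem_inter_left hi)
    have := (heb i hiN).1
    have := (hyp2 i hiN).2
    linarith
  rw [sum_add_distrib] at h1 h2
  rw [hset1]
  linarith
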